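/- Let Z ⊂ P^d be an irreducible two-dimensional cone with vertex v ∈ Z. If Z contains an irreducible conic (irreducible degree-2 curve spanning a plane) passing through v, then Z is a projective plane. -/

import Mathlib

/-!
STATEMENT 2: Let `Z ⊂ ℙ^d` be an irreducible two-dimensional cone with vertex `v ∈ Z`.
If `Z` contains an irreducible conic (irreducible degree-2 plane curve spanning its plane)
passing through `v`, then `Z` is a projective plane.

We set up complex projective space `ℙ^d` as `Projectivization ℂ (Fin (d+1) → ℂ)`,
with its Zariski-closed subsets (common zero loci of homogeneous polynomials),
irreducibility, and dimension (via chains of irreducible closed subsets).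
-/

noncomputable section

abbrev ProjSpace (d : ℕ) := Projectivization ℂ (Fin (d + 1) → ℂ)

/-- A homogeneous polynomial vanishes at a projective point (tested on the chosen
representative; for homogeneous polynomials this is independent of the choice). -/
def VanishesAt {d : ℕ} (f : MvPolynomial (Fin (d + 1)) ℂ) (x : ProjSpace d) : Prop :=
  MvPolynomial.eval x.rep f = 0

/-- Zariski-closed subsets of projective space: common zero loci of sets of
homogeneous polynomials. -/
def IsZarClosed {d : ℕ} (Z : Set (ProjSpace d)) : Prop :=
  ∃ S : Set (MvPolynomial (Fin (d + 1)) ℂ),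
    (∀ f ∈ S, ∃ k : ℕ, f.IsHomogeneous k) ∧ Z = {x | ∀ f ∈ S, VanishesAt f x}

/-- An irreducible (nonempty) Zariski-closed subset. -/
def IsIrredClosed {d : ℕ} (Z : Set (ProjSpace d)) : Prop :=
  IsZarClosed Z ∧ Z.Nonempty ∧
    ∀ Z₁ Z₂ : Set (ProjSpace d), IsZarClosed Z₁ → IsZarClosed Z₂ →
      Z ⊆ Z₁ ∪ Z₂ → Z ⊆ Z₁ ∨ Z ⊆ Z₂

/-- `Z` has dimension at least `m`: there is a strictly increasing chain of `m+1`
irreducible closed subsets contained in `Z`. -/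
def DimGE {d : ℕ} (Z : Set (ProjSpace d)) (m : ℕ) : Prop :=
  ∃ c : Fin (m + 1) → Set (ProjSpace d),
    (∀ i, IsIrredClosed (c i)) ∧ StrictMono c ∧ c (Fin.last m) ⊆ Z

/-- `Z` has dimension exactly `m`. -/
def HasDim {d : ℕ} (Z : Set (ProjSpace d)) (m : ℕ) : Prop :=
  DimGE Z m ∧ ¬ DimGE Z (m + 1)

/-- The projective linear subvariety associated to a linear subspace `W`. -/
def LinearSubvariety {d : ℕ} (W : Submodule ℂ (Fin (d + 1) → ℂ)) : Set (ProjSpace d) :=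
  {x | x.submodule ≤ W}

/-- The projective line through two points. -/
def lineThrough {d : ℕ} (v z : ProjSpace d) : Set (ProjSpace d) :=
  LinearSubvariety (v.submodule ⊔ z.submodule)

/-- `Z` is a cone with vertex `v`: `v ∈ Z` and for every `z ∈ Z` the line through
`v` and `z` is contained in `Z`. -/
def IsConeWithVertex {d : ℕ} (Z : Set (ProjSpace d)) (v : ProjSpace d) : Prop :=
  v ∈ Z ∧ ∀ z ∈ Z, lineThrough v z ⊆ Z

/-- A projective plane: the projectivization of a 3-dimensional linear subspace. -/
def IsPlane {d : ℕ} (Z : Set (ProjSpace d)) : Prop :=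
  ∃ W : Submodule ℂ (Fin (d + 1) → ℂ), Module.finrank ℂ W = 3 ∧ Z = LinearSubvariety W

/-- A projective line: the projectivization of a 2-dimensional linear subspace. -/
def IsLine {d : ℕ} (L : Set (ProjSpace d)) : Prop :=
  ∃ W : Submodule ℂ (Fin (d + 1) → ℂ), Module.finrank ℂ W = 2 ∧ L = LinearSubvariety W


/-- An irreducible conic: an irreducible curve cut out on a projective plane by a
homogeneous polynomial of degree 2, and spanning the plane (not contained in a line). -/
def IsIrredConic {d : ℕ} (C : Set (ProjSpace d)) : Prop :=
  IsIrredClosed C ∧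
    ∃ W : Submodule ℂ (Fin (d + 1) → ℂ), Module.finrank ℂ W = 3 ∧
      (∃ q : MvPolynomial (Fin (d + 1)) ℂ, q.IsHomogeneous 2 ∧
        C = {x | x ∈ LinearSubvariety W ∧ VanishesAt q x}) ∧
      ¬ ∃ L : Set (ProjSpace d), IsLine L ∧ C ⊆ L


section Helpers
open Polynomial
variable {d : ℕ}


lemma homog_eval_smul {n : ℕ} {f : MvPolynomial (Fin (d + 1)) ℂ} (hf : f.IsHomogeneous n)
    (c : ℂ) (u : Fin (d + 1) → ℂ) :
    MvPolynomial.eval (c • u) f = c ^ n * MvPolynomial.eval u f := by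
  rw [MvPolynomial.eval_eq, MvPolynomial.eval_eq, Finset.mul_sum]
  refine Finset.sum_congr rfl fun m hm => ?_
  have hdeg : ∑ i ∈ m.support, m i = n := by
    have := hf (MvPolynomial.mem_support_iff.mp hm)
    simpa [Finsupp.weight_apply, Finsupp.sum] using this
  have : ∏ i ∈ m.support, (c • u) i ^ m i
      = (∏ i ∈ m.support, c ^ m i) * ∏ i ∈ m.support, u i ^ m i := by
    rw [← Finset.prod_mul_distrib]
    exact Finset.prod_congr rfl fun i _ => by simp [mul_pow]
  rw [this, Finset.prod_pow_eq_pow_sum]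
  rw [hdeg]
  ring

lemma polyext {p q : Polynomial ℂ} (h : ∀ t : ℂ, t ≠ 0 → p.eval t = q.eval t) : p = q := by
  have hz : p - q = 0 := by
    apply Polynomial.eq_zero_of_infinite_isRoot
    have hinf : Set.Infinite {t : ℂ | t ≠ 0} := by
      apply Set.infinite_of_finite_compl
      simp [Set.compl_setOf]
    refine hinf.mono fun t ht => ?_
    simp only [Set.mem_setOf_eq, Polynomial.IsRoot, Polynomial.eval_sub, sub_eq_zero]
    exact h t ht
  exact sub_eq_zero.mp hz

def linePoly (f : MvPolynomial (Fin (d + 1)) ℂ) (u w : Fin (d + 1) → ℂ) : Polynomial ℂ :=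
  MvPolynomial.eval₂ Polynomial.C (fun i => Polynomial.C (u i) + Polynomial.X * Polynomial.C (w i)) f

lemma linePoly_eval (f : MvPolynomial (Fin (d + 1)) ℂ) (u w : Fin (d + 1) → ℂ) (t : ℂ) :
    (linePoly f u w).eval t = MvPolynomial.eval (u + t • w) f := by
  have h := MvPolynomial.eval₂_comp_left (Polynomial.evalRingHom t) Polynomial.C
    (fun i => Polynomial.C (u i) + Polynomial.X * Polynomial.C (w i)) f
  have h2 : (Polynomial.evalRingHom t).comp Polynomial.C = RingHom.id ℂ := by
    ext a; simp
  have h3 : (⇑(Polynomial.evalRingHom t) ∘ fun i => Polynomial.C (u i) + Polynomial.X * Polynomial.C (w i)) = u + t • w := by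
    funext i
    simp only [Function.comp_apply, Polynomial.coe_evalRingHom, Polynomial.eval_add,
      Polynomial.eval_mul, Polynomial.eval_C, Polynomial.eval_X, Pi.add_apply, Pi.smul_apply,
      smul_eq_mul]
  rw [show (linePoly f u w).eval t = (Polynomial.evalRingHom t) (linePoly f u w) from rfl,
    linePoly, h, h2, h3]
  rw [MvPolynomial.eval₂_id]

lemma linePoly_eval_zero (f : MvPolynomial (Fin (d + 1)) ℂ) (u w : Fin (d + 1) → ℂ) :
    (linePoly f u w).coeff 0 = MvPolynomial.eval u f := by
  rw [Polynomial.coeff_zero_eq_eval_zero, linePoly_eval]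
  simp

lemma linePoly_eval_inv {n : ℕ} {f : MvPolynomial (Fin (d + 1)) ℂ} (hf : f.IsHomogeneous n)
    (u w : Fin (d + 1) → ℂ) {t : ℂ} (ht : t ≠ 0) :
    (linePoly f u w).eval t = t ^ n * (linePoly f w u).eval t⁻¹ := by
  rw [linePoly_eval, linePoly_eval, ← homog_eval_smul hf t]
  have : t • (w + t⁻¹ • u) = u + t • w := by
    funext i
    simp only [Pi.smul_apply, Pi.add_apply, smul_eq_mul]
    field_simp
    ring
  rw [this]

lemma linePoly_ne_zero {n : ℕ} {f : MvPolynomial (Fin (d + 1)) ℂ} (hf : f.IsHomogeneous n)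
    (u w : Fin (d + 1) → ℂ) (hw : MvPolynomial.eval w f ≠ 0) : linePoly f u w ≠ 0 := by
  intro h0
  apply hw
  have hz : linePoly f w u = 0 := by
    apply polyext (q := 0)
    intro s hs
    have h1 := linePoly_eval_inv hf u w (t := s⁻¹) (inv_ne_zero hs)
    rw [h0, inv_inv] at h1
    simp only [Polynomial.eval_zero] at h1
    have hsn : ((s : ℂ)⁻¹) ^ n ≠ 0 := pow_ne_zero _ (inv_ne_zero hs)
    have := (mul_eq_zero.mp h1.symm).resolve_left hsn
    simpa using this
  have := linePoly_eval_zero f w u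
  rw [hz] at this
  simpa using this.symm

lemma linePoly_natDegree_le {n : ℕ} {f : MvPolynomial (Fin (d + 1)) ℂ} (hf : f.IsHomogeneous n)
    (u w : Fin (d + 1) → ℂ) : (linePoly f u w).natDegree ≤ n := by
  rw [linePoly, MvPolynomial.eval₂_eq]
  apply Polynomial.natDegree_sum_le_of_forall_le
  intro m hm
  have hdeg : ∑ i ∈ m.support, m i = n := by
    have := hf (MvPolynomial.mem_support_iff.mp hm)
    simpa [Finsupp.weight_apply, Finsupp.sum] using this
  calc (Polynomial.C (f.coeff m) * ∏ i ∈ m.support,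
        (Polynomial.C (u i) + Polynomial.X * Polynomial.C (w i)) ^ m i).natDegree
      ≤ (Polynomial.C (f.coeff m)).natDegree + (∏ i ∈ m.support,
        (Polynomial.C (u i) + Polynomial.X * Polynomial.C (w i)) ^ m i).natDegree :=
        Polynomial.natDegree_mul_le
    _ ≤ 0 + ∑ i ∈ m.support,
        ((Polynomial.C (u i) + Polynomial.X * Polynomial.C (w i)) ^ m i).natDegree := by
        gcongr
        · simp
        · exact Polynomial.natDegree_prod_le _ _
    _ ≤ ∑ i ∈ m.support, m i := by
        rw [zero_add]
        apply Finset.sum_le_sum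
        intro i _
        calc ((Polynomial.C (u i) + Polynomial.X * Polynomial.C (w i)) ^ m i).natDegree
            ≤ m i * (Polynomial.C (u i) + Polynomial.X * Polynomial.C (w i)).natDegree :=
              Polynomial.natDegree_pow_le
          _ ≤ m i * 1 := by
              gcongr
              apply le_trans (Polynomial.natDegree_add_le _ _)
              simp [Polynomial.natDegree_C]
              apply le_trans (Polynomial.natDegree_mul_le)
              simp
          _ = m i := mul_one _
    _ = n := hdeg

lemma linePoly_coeff_one (f : MvPolynomial (Fin (d + 1)) ℂ) (u w : Fin (d + 1) → ℂ) :
    (linePoly f u w).coeff 1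
      = ∑ i, w i * MvPolynomial.eval u (MvPolynomial.pderiv i f) := by
  induction f using MvPolynomial.induction_on with
  | C a =>
      simp [linePoly, MvPolynomial.eval₂_C, Polynomial.coeff_C, MvPolynomial.pderiv_C]
  | add p q hp hq =>
      simp only [linePoly, MvPolynomial.eval₂_add, Polynomial.coeff_add, map_add] at *
      rw [hp, hq, ← Finset.sum_add_distrib]
      congr 1
      funext i
      ring
  | mul_X p i hp =>
      have hmul : linePoly (p * MvPolynomial.X i) u w
          = linePoly p u w * (Polynomial.C (u i) + Polynomial.X * Polynomial.C (w i)) := by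
        simp [linePoly, MvPolynomial.eval₂_mul, MvPolynomial.eval₂_X]
      rw [hmul]
      have hc1 : (linePoly p u w * (Polynomial.C (u i) + Polynomial.X * Polynomial.C (w i))).coeff 1
          = (linePoly p u w).coeff 1 * u i + (linePoly p u w).coeff 0 * w i := by
        rw [mul_add]
        rw [Polynomial.coeff_add]
        rw [Polynomial.coeff_mul_C]
        have : linePoly p u w * (Polynomial.X * Polynomial.C (w i))
            = (linePoly p u w * Polynomial.X) * Polynomial.C (w i) := by ring
        rw [this, Polynomial.coeff_mul_C, Polynomial.coeff_mul_X]
      rw [hc1, hp, linePoly_eval_zero]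
      have hpd : ∀ j, MvPolynomial.pderiv j (p * MvPolynomial.X i)
          = MvPolynomial.pderiv j p * MvPolynomial.X i
            + p * (if j = i then 1 else 0) := by
        intro j
        rcases eq_or_ne j i with h | h
        · subst h
          rw [MvPolynomial.pderiv_mul, MvPolynomial.pderiv_X_self]
          simp
        · rw [MvPolynomial.pderiv_mul, MvPolynomial.pderiv_X_of_ne h.symm]
          simp [h]
      have : ∀ j, w j * MvPolynomial.eval u (MvPolynomial.pderiv j (p * MvPolynomial.X i))
          = w j * MvPolynomial.eval u (MvPolynomial.pderiv j p) * u i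
            + (if j = i then MvPolynomial.eval u p * w i else 0) := by
        intro j
        rw [hpd j]
        rcases eq_or_ne j i with h | h <;> simp [h] <;> ring
      rw [Finset.sum_congr rfl fun j _ => this j, Finset.sum_add_distrib]
      simp [Finset.sum_ite_eq', ← Finset.sum_mul]

open Projectivization in
lemma exists_unit_smul_rep (w : Fin (d + 1) → ℂ) (hw : w ≠ 0) :
    ∃ a : ℂˣ, (Projectivization.mk ℂ w hw).rep = a • w := by
  have h := Projectivization.mk_rep (Projectivization.mk ℂ w hw)
  rw [Projectivization.mk_eq_mk_iff] at h
  obtain ⟨a, ha⟩ := h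
  exact ⟨a, ha.symm⟩

lemma vanishesAt_mk {n : ℕ} {f : MvPolynomial (Fin (d + 1)) ℂ} (hf : f.IsHomogeneous n)
    (w : Fin (d + 1) → ℂ) (hw : w ≠ 0) :
    VanishesAt f (Projectivization.mk ℂ w hw) ↔ MvPolynomial.eval w f = 0 := by
  obtain ⟨a, ha⟩ := exists_unit_smul_rep w hw
  unfold VanishesAt
  rw [ha, Units.smul_def, homog_eval_smul hf]
  constructor
  · intro h
    have := (mul_eq_zero.mp h).resolve_left (pow_ne_zero n a.ne_zero)
    exact this
  · intro h
    rw [h, mul_zero]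

lemma mk_mem_linSub {W : Submodule ℂ (Fin (d + 1) → ℂ)} (w : Fin (d + 1) → ℂ) (hw : w ≠ 0) :
    Projectivization.mk ℂ w hw ∈ LinearSubvariety W ↔ w ∈ W := by
  rw [LinearSubvariety, Set.mem_setOf_eq, Projectivization.submodule_mk,
    Submodule.span_singleton_le_iff_mem]

lemma mem_linSub_iff_rep {W : Submodule ℂ (Fin (d + 1) → ℂ)} (x : ProjSpace d) :
    x ∈ LinearSubvariety W ↔ x.rep ∈ W := by
  rw [LinearSubvariety, Set.mem_setOf_eq, Projectivization.submodule_eq,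
    Submodule.span_singleton_le_iff_mem]

/-- linear functional as a polynomial -/
def dualToPoly (φ : Module.Dual ℂ (Fin (d + 1) → ℂ)) : MvPolynomial (Fin (d + 1)) ℂ :=
  ∑ i, MvPolynomial.C (φ (fun j => if i = j then 1 else 0)) * MvPolynomial.X i

lemma dualToPoly_homog (φ : Module.Dual ℂ (Fin (d + 1) → ℂ)) :
    (dualToPoly φ).IsHomogeneous 1 := by
  apply MvPolynomial.IsHomogeneous.sum
  intro i _
  simpa using ((MvPolynomial.isHomogeneous_X ℂ i).C_mul _)

lemma eval_dualToPoly (φ : Module.Dual ℂ (Fin (d + 1) → ℂ)) (u : Fin (d + 1) → ℂ) :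
    MvPolynomial.eval u (dualToPoly φ) = φ u := by
  rw [dualToPoly]
  rw [LinearMap.pi_apply_eq_sum_univ φ u]
  simp [mul_comm]

lemma isZarClosed_linSub (W : Submodule ℂ (Fin (d + 1) → ℂ)) :
    IsZarClosed (LinearSubvariety W) := by
  refine ⟨dualToPoly '' (W.dualAnnihilator : Set _), ?_, ?_⟩
  · rintro f ⟨φ, -, rfl⟩
    exact ⟨1, dualToPoly_homog φ⟩
  · ext x
    rw [mem_linSub_iff_rep]
    constructor
    · rintro hx f ⟨φ, hφ, rfl⟩
      show MvPolynomial.eval x.rep (dualToPoly φ) = 0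
      rw [eval_dualToPoly]
      exact (Submodule.mem_dualAnnihilator φ).mp hφ _ hx
    · intro hx
      rw [← Subspace.forall_mem_dualAnnihilator_apply_eq_zero_iff W x.rep]
      intro φ hφ
      have := hx (dualToPoly φ) ⟨φ, hφ, rfl⟩
      rwa [VanishesAt, eval_dualToPoly] at this

lemma exists_good_t {p : Polynomial ℂ} (hp : p ≠ 0) (u w : Fin (d + 1) → ℂ) (hw : w ≠ 0) :
    ∃ t : ℂ, p.eval t ≠ 0 ∧ u + t • w ≠ 0 := by
  have hfin : ({t : ℂ | p.eval t = 0} ∪ {t : ℂ | u + t • w = 0}).Finite := by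
    apply Set.Finite.union
    · exact Polynomial.finite_setOf_isRoot hp
    · apply Set.Subsingleton.finite
      intro t1 h1 t2 h2
      simp only [Set.mem_setOf_eq] at h1 h2
      have : (t1 - t2) • w = 0 := by
        rw [sub_smul]
        have := sub_eq_zero.mpr (h1.trans h2.symm)
        rw [← this]; abel
      rcases smul_eq_zero.mp this with h | h
      · exact sub_eq_zero.mp h
      · exact absurd h hw
  obtain ⟨t, ht⟩ := (hfin.infinite_compl).nonempty
  simp only [Set.mem_compl_iff, Set.mem_union, Set.mem_setOf_eq, not_or] at ht
  exact ⟨t, ht.1, ht.2⟩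

lemma isIrredClosed_linSub {W : Submodule ℂ (Fin (d + 1) → ℂ)} (hW : W ≠ ⊥) :
    IsIrredClosed (LinearSubvariety W) := by
  refine ⟨isZarClosed_linSub W, ?_, ?_⟩
  · obtain ⟨w, hwW, hw⟩ := Submodule.exists_mem_ne_zero_of_ne_bot hW
    exact ⟨Projectivization.mk ℂ w hw, (mk_mem_linSub w hw).mpr hwW⟩
  · rintro Z₁ Z₂ ⟨S₁, hS₁, rfl⟩ ⟨S₂, hS₂, rfl⟩ hsub
    by_contra hcon
    push_neg at hcon
    obtain ⟨x, hxW, hx1⟩ := Set.not_subset.mp hcon.1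
    obtain ⟨y, hyW, hy2⟩ := Set.not_subset.mp hcon.2
    simp only [Set.mem_setOf_eq, not_forall] at hx1 hy2
    obtain ⟨f, hfS, hfx⟩ := hx1
    obtain ⟨g, hgS, hgy⟩ := hy2
    obtain ⟨k, hfk⟩ := hS₁ f hfS
    obtain ⟨l, hgl⟩ := hS₂ g hgS
    have hfx' : MvPolynomial.eval x.rep f ≠ 0 := hfx
    have hgy' : MvPolynomial.eval y.rep g ≠ 0 := hgy
    have hyrep : y.rep ≠ 0 := y.rep_nonzero
    set p : Polynomial ℂ := linePoly f x.rep y.rep * linePoly g x.rep y.rep with hp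
    have hp1 : linePoly f x.rep y.rep ≠ 0 := by
      intro h
      apply hfx'
      rw [← linePoly_eval_zero f x.rep y.rep, h, Polynomial.coeff_zero]
    have hp2 : linePoly g x.rep y.rep ≠ 0 := linePoly_ne_zero hgl x.rep y.rep hgy'
    have hpne : p ≠ 0 := mul_ne_zero hp1 hp2
    obtain ⟨t, hpt, hvne⟩ := exists_good_t hpne x.rep y.rep hyrep
    set wv := x.rep + t • y.rep with hwv
    have hwvW : wv ∈ W := W.add_mem ((mem_linSub_iff_rep x).mp hxW)
      (W.smul_mem _ ((mem_linSub_iff_rep y).mp hyW))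
    have hm : Projectivization.mk ℂ wv hvne ∈ LinearSubvariety W :=
      (mk_mem_linSub wv hvne).mpr hwvW
    have hfe : MvPolynomial.eval wv f ≠ 0 ∧ MvPolynomial.eval wv g ≠ 0 := by
      rw [hp] at hpt
      simp only [Polynomial.eval_mul, linePoly_eval] at hpt
      exact ⟨fun h => hpt (by rw [hwv] at *; rw [h, zero_mul]),
        fun h => hpt (by rw [hwv] at *; rw [h, mul_zero])⟩
    rcases hsub hm with hm1 | hm1
    · exact hfe.1 ((vanishesAt_mk hfk wv hvne).mp (hm1 f hfS))
    · exact hfe.2 ((vanishesAt_mk hgl wv hvne).mp (hm1 g hgS))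

/-- density: a closed set containing the complement of a "line" in a linear
subvariety contains the whole subvariety -/
lemma linSub_subset_closed {W T : Submodule ℂ (Fin (d + 1) → ℂ)}
    {Z : Set (ProjSpace d)} (hZ : IsZarClosed Z)
    (hx₀ : ∃ x₀, x₀ ∈ W ∧ x₀ ∉ T)
    (h : ∀ p : ProjSpace d, p ∈ LinearSubvariety W → p ∉ LinearSubvariety T → p ∈ Z) :
    LinearSubvariety W ⊆ Z := by
  obtain ⟨x₀, hx₀W, hx₀T⟩ := hx₀
  obtain ⟨S, hS, rfl⟩ := hZ
  intro p hpW
  by_cases hpT : p ∈ LinearSubvariety T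
  swap
  · exact h p hpW hpT
  intro f hfS
  obtain ⟨n, hfn⟩ := hS f hfS
  have hrepT : p.rep ∈ T := (mem_linSub_iff_rep p).mp hpT
  have hrepW : p.rep ∈ W := (mem_linSub_iff_rep p).mp hpW
  have key : ∀ t : ℂ, t ≠ 0 → (linePoly f p.rep x₀).eval t = 0 := by
    intro t ht
    have hwne : p.rep + t • x₀ ≠ 0 := by
      intro hcon
      apply hx₀T
      have h1 : t • x₀ = -p.rep := eq_neg_of_add_eq_zero_right hcon
      have h2 : x₀ = t⁻¹ • -p.rep := by
        rw [← h1, smul_smul, inv_mul_cancel₀ ht, one_smul]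
      rw [h2]
      exact T.smul_mem _ (T.neg_mem hrepT)
    have hwW : p.rep + t • x₀ ∈ W := W.add_mem hrepW (W.smul_mem _ hx₀W)
    have hwnT : p.rep + t • x₀ ∉ T := by
      intro hcon
      apply hx₀T
      have : t • x₀ ∈ T := by
        have := T.sub_mem hcon hrepT
        simpa using this
      have := T.smul_mem t⁻¹ this
      rwa [smul_smul, inv_mul_cancel₀ ht, one_smul] at this
    have hz := h (Projectivization.mk ℂ _ hwne)
      ((mk_mem_linSub _ hwne).mpr hwW)
      (fun hcon => hwnT ((mk_mem_linSub _ hwne).mp hcon))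
    have := (vanishesAt_mk hfn _ hwne).mp (hz f hfS)
    rwa [linePoly_eval]
  have : linePoly f p.rep x₀ = 0 := polyext (q := 0) (by simpa using key)
  show MvPolynomial.eval p.rep f = 0
  rw [← linePoly_eval_zero f p.rep x₀, this, Polynomial.coeff_zero]

lemma linSub_mono {W₁ W₂ : Submodule ℂ (Fin (d + 1) → ℂ)} (h : W₁ ≤ W₂) :
    LinearSubvariety W₁ ⊆ LinearSubvariety W₂ := fun x hx =>
  (mem_linSub_iff_rep x).mpr (h ((mem_linSub_iff_rep x).mp hx))

lemma linSub_ssub {W₁ W₂ : Submodule ℂ (Fin (d + 1) → ℂ)} (h : W₁ < W₂) :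
    LinearSubvariety W₁ < LinearSubvariety W₂ := by
  obtain ⟨x, hx2, hx1⟩ := SetLike.exists_of_lt h
  have hxne : x ≠ 0 := fun h0 => hx1 (h0 ▸ W₁.zero_mem)
  refine lt_of_le_of_ne (linSub_mono h.le) fun heq => ?_
  have : Projectivization.mk ℂ x hxne ∈ LinearSubvariety W₁ := by
    rw [heq]; exact (mk_mem_linSub x hxne).mpr hx2
  exact hx1 ((mk_mem_linSub x hxne).mp this)

lemma exists_flag {W : Submodule ℂ (Fin (d + 1) → ℂ)} (hW3 : Module.finrank ℂ W = 3) :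
    ∃ W₁ W₂ : Submodule ℂ (Fin (d + 1) → ℂ), W₁ < W₂ ∧ W₂ < W ∧
      Module.finrank ℂ W₁ = 1 ∧ Module.finrank ℂ W₂ = 2 := by
  have : Module.Finite ℂ W := Module.finite_of_finrank_pos (by omega)
  let b := Module.finBasisOfFinrankEq ℂ W hW3
  let fv : Fin 3 → (Fin (d + 1) → ℂ) := fun i => (b i : Fin (d + 1) → ℂ)
  have hli : LinearIndependent ℂ fv :=
    b.linearIndependent.map' W.subtype (Submodule.ker_subtype W)
  have hmem : ∀ i, fv i ∈ W := fun i => (b i).2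
  refine ⟨Submodule.span ℂ (Set.range (fv ∘ (Fin.castLE (by omega) : Fin 1 → Fin 3))),
    Submodule.span ℂ (Set.range (fv ∘ (Fin.castLE (by omega) : Fin 2 → Fin 3))), ?_, ?_, ?_, ?_⟩
  · apply Submodule.lt_of_le_of_finrank_lt_finrank
    · apply Submodule.span_mono
      rintro _ ⟨i, rfl⟩
      exact ⟨Fin.castLE (by omega) i, rfl⟩
    · rw [finrank_span_eq_card (hli.comp _ (Fin.castLE_injective _)),
        finrank_span_eq_card (hli.comp _ (Fin.castLE_injective _))]
      simp
  · apply Submodule.lt_of_le_of_finrank_lt_finrank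
    · rw [Submodule.span_le]
      rintro _ ⟨i, rfl⟩
      exact hmem _
    · rw [finrank_span_eq_card (hli.comp _ (Fin.castLE_injective _)), hW3]
      simp
  · rw [finrank_span_eq_card (hli.comp _ (Fin.castLE_injective _))]; simp
  · rw [finrank_span_eq_card (hli.comp _ (Fin.castLE_injective _))]; simp

lemma ne_bot_of_finrank_pos {W : Submodule ℂ (Fin (d + 1) → ℂ)} {n : ℕ}
    (h : Module.finrank ℂ W = n) (hn : 0 < n) : W ≠ ⊥ := by
  intro hbot
  rw [hbot, finrank_bot] at h
  omega

lemma mk_eq_of_smul {w : Fin (d + 1) → ℂ} (hw : w ≠ 0) {c : ℂ} (hc : c ≠ 0)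
    (hcw : c • w ≠ 0) : Projectivization.mk ℂ (c • w) hcw = Projectivization.mk ℂ w hw :=
  (Projectivization.mk_eq_mk_iff' ℂ _ _ _ _).mpr ⟨c, rfl⟩

lemma mem_lineThrough_mk {v : ProjSpace d} {w : Fin (d + 1) → ℂ} (hw : w ≠ 0)
    (p : ProjSpace d) :
    p ∈ lineThrough v (Projectivization.mk ℂ w hw) ↔
      p.rep ∈ Submodule.span ℂ {v.rep, w} := by
  rw [lineThrough, mem_linSub_iff_rep, Projectivization.submodule_mk,
    Projectivization.submodule_eq]
  rw [show (Submodule.span ℂ {v.rep} ⊔ Submodule.span ℂ {w} : Submodule ℂ _)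
      = Submodule.span ℂ ({v.rep} ∪ {w}) from (Submodule.span_union _ _).symm]
  rw [Set.singleton_union]

lemma q_const_along {q : MvPolynomial (Fin (d + 1)) ℂ} (hq2 : q.IsHomogeneous 2)
    {vr w : Fin (d + 1) → ℂ} (hv0 : MvPolynomial.eval vr q = 0)
    (hc1 : (linePoly q vr w).coeff 1 = 0) (lam : ℂ) :
    MvPolynomial.eval (w + lam • vr) q = MvPolynomial.eval w q := by
  have h0 : (linePoly q vr w).coeff 0 = 0 := by rw [linePoly_eval_zero]; exact hv0
  have hdeg := linePoly_natDegree_le hq2 vr w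
  have hrC : linePoly q vr w
      = Polynomial.C ((linePoly q vr w).coeff 2) * Polynomial.X ^ 2 := by
    ext k
    match k with
    | 0 => simp [h0, Polynomial.coeff_X_pow]
    | 1 => simp [hc1, Polynomial.coeff_X_pow]
    | 2 => simp [Polynomial.coeff_X_pow]
    | (k + 3) =>
      rw [Polynomial.coeff_eq_zero_of_natDegree_lt (by omega)]
      simp [Polynomial.coeff_X_pow]
  have hψ : linePoly q w vr = Polynomial.C ((linePoly q vr w).coeff 2) := by
    apply polyext
    intro t ht
    rw [linePoly_eval_inv hq2 w vr ht, hrC]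
    simp only [Polynomial.eval_mul, Polynomial.eval_C, Polynomial.eval_pow, Polynomial.eval_X]
    field_simp
    simp [Polynomial.coeff_X_pow]
  have h1 : MvPolynomial.eval (w + lam • vr) q = (linePoly q w vr).eval lam :=
    (linePoly_eval q w vr lam).symm
  have h2 : MvPolynomial.eval w q = (linePoly q w vr).eval 0 := by
    rw [linePoly_eval]; simp
  rw [h1, h2, hψ]
  simp

lemma point_in_Z {Z : Set (ProjSpace d)} {v : ProjSpace d}
    (hcone : IsConeWithVertex Z v)
    {C : Set (ProjSpace d)} (hCZ : C ⊆ Z)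
    {W : Submodule ℂ (Fin (d + 1) → ℂ)}
    {q : MvPolynomial (Fin (d + 1)) ℂ} (hq2 : q.IsHomogeneous 2)
    (hCeq : C = {x | x ∈ LinearSubvariety W ∧ VanishesAt q x})
    (hvW : v.rep ∈ W) (hv0 : MvPolynomial.eval v.rep q = 0)
    {p : ProjSpace d} (hpW : p.rep ∈ W)
    (ha : (linePoly q v.rep p.rep).coeff 1 ≠ 0) : p ∈ Z := by
  by_cases hpq : MvPolynomial.eval p.rep q = 0
  · apply hCZ
    rw [hCeq]
    exact ⟨(mem_linSub_iff_rep p).mpr hpW, hpq⟩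
  by_cases hpv : p = v
  · rw [hpv]; exact hcone.1
  have hr0 : (linePoly q v.rep p.rep).coeff 0 = 0 := by rw [linePoly_eval_zero]; exact hv0
  have hs0 : (linePoly q v.rep p.rep).divX.coeff 0 ≠ 0 := by rwa [Polynomial.coeff_divX]
  have hsdeg : 0 < (linePoly q v.rep p.rep).divX.degree := by
    by_contra hdeg
    push_neg at hdeg
    have hsC := Polynomial.eq_C_of_degree_le_zero hdeg
    have hrX : linePoly q v.rep p.rep
        = Polynomial.C ((linePoly q v.rep p.rep).divX.coeff 0) * Polynomial.X := by
      conv_lhs => rw [← (linePoly q v.rep p.rep).divX_mul_X_add]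
      rw [hr0, map_zero, add_zero]
      rw [← hsC]
    apply hpq
    have hψ : linePoly q p.rep v.rep
        = Polynomial.C ((linePoly q v.rep p.rep).divX.coeff 0) * Polynomial.X := by
      apply polyext
      intro t ht
      rw [linePoly_eval_inv hq2 p.rep v.rep ht, hrX]
      simp only [Polynomial.eval_mul, Polynomial.eval_C, Polynomial.eval_X]
      field_simp
      ring
      simp [Polynomial.coeff_divX]
    rw [← linePoly_eval_zero q p.rep v.rep, hψ]
    simp
  obtain ⟨t₀, ht₀⟩ := Complex.exists_root hsdeg
  have ht₀ne : t₀ ≠ 0 := by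
    intro h0
    apply hs0
    rw [h0] at ht₀
    simpa [Polynomial.coeff_zero_eq_eval_zero] using ht₀
  have hrt₀ : (linePoly q v.rep p.rep).eval t₀ = 0 := by
    conv_lhs => rw [← (linePoly q v.rep p.rep).divX_mul_X_add]
    rw [hr0, map_zero, add_zero, Polynomial.eval_mul, Polynomial.eval_X,
      show Polynomial.eval t₀ (linePoly q v.rep p.rep).divX = 0 from ht₀, zero_mul]
  have hwq : MvPolynomial.eval (v.rep + t₀ • p.rep) q = 0 := by
    rw [← linePoly_eval]; exact hrt₀
  have hwne : v.rep + t₀ • p.rep ≠ 0 := by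
    intro hcon
    apply hpv
    have h1 : p.rep = (-t₀⁻¹) • v.rep := by
      have h2 : t₀ • p.rep = -v.rep := eq_neg_of_add_eq_zero_right hcon
      have h3 := congrArg (fun z => t₀⁻¹ • z) h2
      simp only [smul_smul, inv_mul_cancel₀ ht₀ne, one_smul, smul_neg] at h3
      rw [h3, neg_smul]
    have h3 : (-t₀⁻¹ : ℂ) ≠ 0 := by simpa using inv_ne_zero ht₀ne
    calc p = Projectivization.mk ℂ p.rep p.rep_nonzero := (Projectivization.mk_rep p).symm
      _ = Projectivization.mk ℂ v.rep v.rep_nonzero := by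
          rw [show (Projectivization.mk ℂ p.rep p.rep_nonzero)
            = Projectivization.mk ℂ ((-t₀⁻¹) • v.rep) (h1 ▸ p.rep_nonzero) by
              congr 1 <;> rw [h1]]
          exact mk_eq_of_smul v.rep_nonzero h3 _
      _ = v := Projectivization.mk_rep v
  have hzC : Projectivization.mk ℂ _ hwne ∈ C := by
    rw [hCeq]
    refine ⟨(mk_mem_linSub _ hwne).mpr (W.add_mem hvW (W.smul_mem _ hpW)), ?_⟩
    exact (vanishesAt_mk hq2 _ hwne).mpr hwq
  apply hcone.2 _ (hCZ hzC)
  rw [mem_lineThrough_mk hwne p]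
  rw [Submodule.mem_span_pair]
  refine ⟨-t₀⁻¹, t₀⁻¹, ?_⟩
  funext i
  simp only [Pi.add_apply, Pi.smul_apply, smul_eq_mul, neg_mul]
  field_simp
  ring

lemma indep_pair {a b : Fin (d + 1) → ℂ} (ha : a ≠ 0) (hb : b ∉ Submodule.span ℂ {a}) :
    LinearIndependent ℂ ![b, a] := by
  rw [LinearIndependent.pair_iff]
  intro s t hst
  by_cases hs : s = 0
  · subst hs
    rw [zero_smul, zero_add] at hst
    rcases smul_eq_zero.mp hst with h | h
    · exact ⟨rfl, h⟩
    · exact absurd h ha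
  · exfalso
    apply hb
    rw [Submodule.mem_span_singleton]
    refine ⟨-s⁻¹ * t, ?_⟩
    have : s • b = -(t • a) := eq_neg_of_add_eq_zero_left hst
    have h3 := congrArg (fun z => s⁻¹ • z) this
    simp only [smul_smul, inv_mul_cancel₀ hs, one_smul, smul_neg] at h3
    rw [h3, neg_mul, neg_smul, mul_smul]

lemma isLine_span_pair {a b : Fin (d + 1) → ℂ} (h : LinearIndependent ℂ ![b, a]) :
    IsLine (LinearSubvariety (Submodule.span ℂ {b, a})) := by
  refine ⟨Submodule.span ℂ {b, a}, ?_, rfl⟩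
  have : ({b, a} : Set (Fin (d + 1) → ℂ)) = Set.range ![b, a] := by
    rw [Matrix.range_cons, Matrix.range_cons, Matrix.range_empty]
    simp only [Set.union_empty, Set.union_singleton]
    exact Set.pair_comm b a
  rw [this, finrank_span_eq_card h]
  simp

lemma eq_of_rep_mem_span {x y : ProjSpace d}
    (h : x.rep ∈ Submodule.span ℂ {y.rep}) : x = y := by
  rw [Submodule.mem_span_singleton] at h
  obtain ⟨a, ha⟩ := h
  have hane : a ≠ 0 := by
    intro h0
    apply x.rep_nonzero
    rw [← ha, h0, zero_smul]
  calc x = Projectivization.mk ℂ x.rep x.rep_nonzero := (Projectivization.mk_rep x).symm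
    _ = Projectivization.mk ℂ y.rep y.rep_nonzero := by
        rw [show Projectivization.mk ℂ x.rep x.rep_nonzero
          = Projectivization.mk ℂ (a • y.rep) (ha ▸ x.rep_nonzero) by congr 1 <;> rw [← ha]]
        exact mk_eq_of_smul y.rep_nonzero hane _
    _ = y := Projectivization.mk_rep y

lemma range_pair (a b : Fin (d + 1) → ℂ) : Set.range ![a, b] = {a, b} := by
  rw [Matrix.range_cons, Matrix.range_cons, Matrix.range_empty]
  simp only [Set.union_empty, Set.union_singleton]
  exact Set.pair_comm b a

lemma caseA {Z : Set (ProjSpace d)} {v : ProjSpace d}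
    {C : Set (ProjSpace d)} (hCZ : C ⊆ Z)
    (hCirr : IsIrredClosed C)
    {W : Submodule ℂ (Fin (d + 1) → ℂ)} (hW3 : Module.finrank ℂ W = 3)
    {q : MvPolynomial (Fin (d + 1)) ℂ} (hq2 : q.IsHomogeneous 2)
    (hCeq : C = {x | x ∈ LinearSubvariety W ∧ VanishesAt q x})
    (hnoline : ¬∃ L : Set (ProjSpace d), IsLine L ∧ C ⊆ L)
    (hvC : v ∈ C)
    (hall : ∀ w ∈ W, (linePoly q v.rep w).coeff 1 = 0) :
    LinearSubvariety W ⊆ Z := by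
  have hmemC : ∀ z : ProjSpace d, z ∈ C ↔ z.rep ∈ W ∧ MvPolynomial.eval z.rep q = 0 := by
    intro z
    rw [hCeq]
    exact ⟨fun h => ⟨(mem_linSub_iff_rep z).mp h.1, h.2⟩,
      fun h => ⟨(mem_linSub_iff_rep z).mpr h.1, h.2⟩⟩
  obtain ⟨hvW, hv0⟩ := (hmemC v).mp hvC
  have hQc : ∀ w ∈ W, ∀ lam : ℂ, MvPolynomial.eval (w + lam • v.rep) q
      = MvPolynomial.eval w q := fun w hw lam => q_const_along hq2 hv0 (hall w hw) lam
  have hz1 : ∃ z1 ∈ C, z1 ≠ v := by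
    by_contra hcon
    push_neg at hcon
    have hbW : ∃ b ∈ W, b ∉ Submodule.span ℂ {v.rep} := by
      by_contra hcon2
      push_neg at hcon2
      have hle : W ≤ Submodule.span ℂ {v.rep} := hcon2
      have hfr := Submodule.finrank_mono hle
      rw [hW3, finrank_span_singleton v.rep_nonzero] at hfr
      omega
    obtain ⟨b, hbW, hbv⟩ := hbW
    apply hnoline
    refine ⟨_, isLine_span_pair (indep_pair v.rep_nonzero hbv), fun z hz => ?_⟩
    rw [hcon z hz, mem_linSub_iff_rep]
    exact Submodule.subset_span (by simp)
  obtain ⟨z1, hz1C, hz1v⟩ := hz1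
  obtain ⟨hz1W, hz10⟩ := (hmemC z1).mp hz1C
  have hz1sp : z1.rep ∉ Submodule.span ℂ {v.rep} := fun h => hz1v (eq_of_rep_mem_span h)
  have hL1line : IsLine (LinearSubvariety (Submodule.span ℂ {z1.rep, v.rep})) :=
    isLine_span_pair (indep_pair v.rep_nonzero hz1sp)
  obtain ⟨z2, hz2C, hz2L1⟩ := Set.not_subset.mp
    (fun h => hnoline ⟨_, hL1line, h⟩)
  obtain ⟨hz2W, hz20⟩ := (hmemC z2).mp hz2C
  have hz2sp : z2.rep ∉ Submodule.span ℂ {v.rep} := by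
    intro h
    apply hz2L1
    rw [mem_linSub_iff_rep]
    exact Submodule.span_mono (by simp) h
  have hL2line : IsLine (LinearSubvariety (Submodule.span ℂ {z2.rep, v.rep})) :=
    isLine_span_pair (indep_pair v.rep_nonzero hz2sp)
  have hz3 : ∃ z3 ∈ C, z3 ∉ LinearSubvariety (Submodule.span ℂ {z1.rep, v.rep})
      ∪ LinearSubvariety (Submodule.span ℂ {z2.rep, v.rep}) := by
    by_contra hcon
    push_neg at hcon
    rcases hCirr.2.2 _ _ (isZarClosed_linSub _) (isZarClosed_linSub _) hcon with h | h
    · exact hnoline ⟨_, hL1line, h⟩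
    · exact hnoline ⟨_, hL2line, h⟩
  obtain ⟨z3, hz3C, hz3L⟩ := hz3
  obtain ⟨hz3W, hz30⟩ := (hmemC z3).mp hz3C
  have hz3L1 : z3.rep ∉ Submodule.span ℂ {z1.rep, v.rep} := by
    intro h; exact hz3L (Or.inl ((mem_linSub_iff_rep z3).mpr h))
  have hz3L2 : z3.rep ∉ Submodule.span ℂ {z2.rep, v.rep} := by
    intro h; exact hz3L (Or.inr ((mem_linSub_iff_rep z3).mpr h))
  have htriple : LinearIndependent ℂ ![z3.rep, z1.rep, v.rep] := by
    rw [show (![z3.rep, z1.rep, v.rep] : Fin 3 → (Fin (d+1) → ℂ))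
        = Fin.cons z3.rep ![z1.rep, v.rep] from rfl, linearIndependent_fin_cons]
    refine ⟨indep_pair v.rep_nonzero hz1sp, ?_⟩
    rwa [range_pair]
  have hspan : Submodule.span ℂ {z3.rep, z1.rep, v.rep} = W := by
    apply Submodule.eq_of_le_of_finrank_eq
    · rw [Submodule.span_le]
      intro x hx
      rcases hx with rfl | rfl | rfl
      · exact hz3W
      · exact hz1W
      · exact hvW
    · rw [show ({z3.rep, z1.rep, v.rep} : Set (Fin (d+1) → ℂ))
          = Set.range ![z3.rep, z1.rep, v.rep] by
            rw [Matrix.range_cons, range_pair, Set.singleton_union],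
        finrank_span_eq_card htriple, hW3]
      simp
  have hcoord : ∀ u, u ∈ W → ∃ c s t : ℂ, u = c • z3.rep + s • z1.rep + t • v.rep := by
    intro u hu
    have : u ∈ Submodule.span ℂ (insert z3.rep {z1.rep, v.rep}) := by
      rw [show (insert z3.rep {z1.rep, v.rep} : Set (Fin (d+1) → ℂ))
        = {z3.rep, z1.rep, v.rep} from rfl, hspan]
      exact hu
    rw [Submodule.mem_span_insert] at this
    obtain ⟨c, y, hy, hu'⟩ := this
    rw [Submodule.mem_span_pair] at hy
    obtain ⟨s, t, hy'⟩ := hy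
    exact ⟨c, s, t, by rw [hu', ← hy', add_assoc]⟩
  obtain ⟨c2, s2, t2, hz2eq⟩ := hcoord z2.rep hz2W
  have hc2 : c2 ≠ 0 := by
    intro h0
    apply hz2L1
    rw [mem_linSub_iff_rep, hz2eq, h0, zero_smul, zero_add]
    exact Submodule.mem_span_pair.mpr ⟨s2, t2, rfl⟩
  have hs2 : s2 ≠ 0 := by
    intro h0
    apply hz3L2
    rw [Submodule.mem_span_pair]
    refine ⟨c2⁻¹, -(c2⁻¹ * t2), ?_⟩
    rw [hz2eq, h0, zero_smul, add_zero]
    funext i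
    simp only [Pi.add_apply, Pi.smul_apply, smul_eq_mul, neg_mul]
    field_simp
    ring
  have hmid : MvPolynomial.eval (c2 • z3.rep + s2 • z1.rep) q = 0 := by
    have hmem : c2 • z3.rep + s2 • z1.rep ∈ W :=
      W.add_mem (W.smul_mem _ hz3W) (W.smul_mem _ hz1W)
    have h1 := hQc _ hmem t2
    rw [show c2 • z3.rep + s2 • z1.rep + t2 • v.rep = z2.rep from hz2eq.symm] at h1
    rw [← h1, hz20]
  have hh0 : (linePoly q z3.rep z1.rep).coeff 0 = 0 := by
    rw [linePoly_eval_zero]; exact hz30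
  have hhdeg := linePoly_natDegree_le hq2 z3.rep z1.rep
  have hhC : linePoly q z3.rep z1.rep
      = Polynomial.C ((linePoly q z3.rep z1.rep).coeff 1) * Polynomial.X
        + Polynomial.C ((linePoly q z3.rep z1.rep).coeff 2) * Polynomial.X ^ 2 := by
    ext k
    match k with
    | 0 => simp [hh0, Polynomial.coeff_X_pow]
    | 1 => simp [Polynomial.coeff_X_pow]
    | 2 => simp [Polynomial.coeff_X_pow]
    | (k + 3) =>
      rw [Polynomial.coeff_eq_zero_of_natDegree_lt (by omega)]
      simp [Polynomial.coeff_X_pow]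
  have hk : linePoly q z1.rep z3.rep
      = Polynomial.C ((linePoly q z3.rep z1.rep).coeff 2)
        + Polynomial.C ((linePoly q z3.rep z1.rep).coeff 1) * Polynomial.X := by
    apply polyext
    intro t ht
    rw [linePoly_eval_inv hq2 z1.rep z3.rep ht, hhC]
    simp only [Polynomial.eval_mul, Polynomial.eval_C, Polynomial.eval_pow,
      Polynomial.eval_X, Polynomial.eval_add]
    field_simp
    ring
    simp [Polynomial.coeff_X_pow, Polynomial.coeff_X]
  have hcoeff2 : (linePoly q z3.rep z1.rep).coeff 2 = 0 := by
    have h1 := linePoly_eval_zero q z1.rep z3.rep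
    rw [hk, hz10] at h1
    simpa using h1
  have hcoeff1 : (linePoly q z3.rep z1.rep).coeff 1 = 0 := by
    have hev : (linePoly q z3.rep z1.rep).eval (s2 / c2) = 0 := by
      have hsc : c2 • (z3.rep + (s2 / c2) • z1.rep) = c2 • z3.rep + s2 • z1.rep := by
        funext i
        simp only [Pi.add_apply, Pi.smul_apply, smul_eq_mul]
        field_simp
      have h2 := homog_eval_smul hq2 c2 (z3.rep + (s2 / c2) • z1.rep)
      rw [hsc, hmid] at h2
      have hc2sq : (c2 : ℂ) ^ 2 ≠ 0 := pow_ne_zero _ hc2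
      have h3 := (mul_eq_zero.mp h2.symm).resolve_left hc2sq
      rwa [linePoly_eval]
    rw [hhC, hcoeff2] at hev
    simp only [Polynomial.eval_add, Polynomial.eval_mul, Polynomial.eval_C,
      Polynomial.eval_pow, Polynomial.eval_X, map_zero, zero_mul, add_zero] at hev
    rcases mul_eq_zero.mp hev with h | h
    · exact h
    · exact absurd (by field_simp at h; simpa using h) hs2
  have hzero : linePoly q z3.rep z1.rep = 0 := by
    rw [hhC, hcoeff1, hcoeff2]
    simp
  intro x hxW
  apply hCZ
  rw [hmemC x]
  have hxrep : x.rep ∈ W := (mem_linSub_iff_rep x).mp hxW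
  refine ⟨hxrep, ?_⟩
  obtain ⟨c, s, t, hxeq⟩ := hcoord x.rep hxrep
  have hmem2 : c • z3.rep + s • z1.rep ∈ W :=
    W.add_mem (W.smul_mem _ hz3W) (W.smul_mem _ hz1W)
  rw [hxeq, hQc _ hmem2 t]
  by_cases hc : c = 0
  · rw [hc, zero_smul, zero_add, homog_eval_smul hq2 s, hz10, mul_zero]
  · have hsc : c • (z3.rep + (s / c) • z1.rep) = c • z3.rep + s • z1.rep := by
      funext i
      simp only [Pi.add_apply, Pi.smul_apply, smul_eq_mul]
      field_simp
    rw [← hsc, homog_eval_smul hq2 c, ← linePoly_eval, hzero]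
    simp

lemma planeSubZ {Z : Set (ProjSpace d)} {v : ProjSpace d}
    (hirr : IsIrredClosed Z) (hcone : IsConeWithVertex Z v)
    {C : Set (ProjSpace d)} (hCZ : C ⊆ Z) (hCirr : IsIrredClosed C)
    {W : Submodule ℂ (Fin (d + 1) → ℂ)} (hW3 : Module.finrank ℂ W = 3)
    {q : MvPolynomial (Fin (d + 1)) ℂ} (hq2 : q.IsHomogeneous 2)
    (hCeq : C = {x | x ∈ LinearSubvariety W ∧ VanishesAt q x})
    (hnoline : ¬∃ L : Set (ProjSpace d), IsLine L ∧ C ⊆ L)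
    (hvC : v ∈ C) :
    LinearSubvariety W ⊆ Z := by
  have hvW : v.rep ∈ W := by
    have := hvC
    rw [hCeq] at this
    exact (mem_linSub_iff_rep v).mp this.1
  have hv0 : MvPolynomial.eval v.rep q = 0 := by
    have := hvC
    rw [hCeq] at this
    exact this.2
  by_cases hall : ∀ w ∈ W, (linePoly q v.rep w).coeff 1 = 0
  · exact caseA hCZ hCirr hW3 hq2 hCeq hnoline hvC hall
  push_neg at hall
  obtain ⟨w₀, hw₀W, hw₀⟩ := hall
  set φ : (Fin (d + 1) → ℂ) →ₗ[ℂ] ℂ :=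
    ∑ i, MvPolynomial.eval v.rep (MvPolynomial.pderiv i q) • LinearMap.proj i with hφ
  have hφeq : ∀ w, φ w = (linePoly q v.rep w).coeff 1 := by
    intro w
    rw [linePoly_coeff_one, hφ]
    simp only [LinearMap.coe_sum, Finset.sum_apply, LinearMap.smul_apply,
      LinearMap.proj_apply, smul_eq_mul]
    exact Finset.sum_congr rfl fun i _ => mul_comm _ _
  apply linSub_subset_closed (T := W ⊓ LinearMap.ker φ) hirr.1
  · refine ⟨w₀, hw₀W, fun h => hw₀ ?_⟩
    rw [← hφeq]
    exact (Submodule.mem_inf.mp h).2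
  · intro p hpW hpT
    have hpW' : p.rep ∈ W := (mem_linSub_iff_rep p).mp hpW
    have hpφ : (linePoly q v.rep p.rep).coeff 1 ≠ 0 := by
      intro h0
      apply hpT
      rw [mem_linSub_iff_rep]
      exact Submodule.mem_inf.mpr ⟨hpW', by rw [LinearMap.mem_ker, hφeq, h0]⟩
    exact point_in_Z hcone hCZ hq2 hCeq hvW hv0 hpW' hpφ

end Helpers

/-- An irreducible two-dimensional cone containing an irreducible conic through the
vertex is a projective plane. -/
theorem stmt_2 {d : ℕ} (Z : Set (ProjSpace d)) (v : ProjSpace d)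
    (hirr : IsIrredClosed Z) (hdim : HasDim Z 2) (hcone : IsConeWithVertex Z v)
    (C : Set (ProjSpace d)) (hC : IsIrredConic C) (hCZ : C ⊆ Z) (hvC : v ∈ C) :
    IsPlane Z := by
  obtain ⟨hCirr, W, hW3, ⟨q, hq2, hCeq⟩, hnoline⟩ := hC
  have hplane : LinearSubvariety W ⊆ Z :=
    planeSubZ hirr hcone hCZ hCirr hW3 hq2 hCeq hnoline hvC
  refine ⟨W, hW3, ?_⟩
  refine Set.Subset.antisymm ?_ hplane
  by_contra hns
  obtain ⟨z, hzZ, hzP⟩ := Set.not_subset.mp hns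
  apply hdim.2
  obtain ⟨W₁, W₂, h12, h2W, hf1, hf2⟩ := exists_flag hW3
  refine ⟨![LinearSubvariety W₁, LinearSubvariety W₂, LinearSubvariety W, Z], ?_, ?_, ?_⟩
  · intro i
    fin_cases i
    · exact isIrredClosed_linSub (ne_bot_of_finrank_pos hf1 one_pos)
    · exact isIrredClosed_linSub (ne_bot_of_finrank_pos hf2 two_pos)
    · exact isIrredClosed_linSub (ne_bot_of_finrank_pos hW3 three_pos)
    · exact hirr
  · rw [Fin.strictMono_iff_lt_succ]
    intro i
    fin_cases i
    · show LinearSubvariety W₁ < LinearSubvariety W₂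
      exact linSub_ssub h12
    · show LinearSubvariety W₂ < LinearSubvariety W
      exact linSub_ssub h2W
    · show LinearSubvariety W < Z
      exact lt_of_le_of_ne hplane fun h => hzP (h.symm ▸ hzZ)
  · intro x hx
    exact hx
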